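/- Each of the three colour classes (the set of red rational unit vectors, the set of white rational unit vectors, and the set of black rational unit vectors) is dense in the unit sphere of EuclideanSpace ℝ (Fin 3). -/

import Mathlib

/-!
Inverse stereographic projection from the north pole sends `(u, v)` to
`(2u, 2v, u² + v² - 1) / (u² + v² + 1)`. At `u = 2a/c`, `v = 2b/c` with `c` odd, clearing
denominators gives the integer vector `(4ac, 4bc, 4a² + 4b² - c²)` whose only odd entry is the
last one, and dividing out the gcd keeps it odd, so the point is black. Such parameters are dense
in the plane, hence black points are dense in the sphere minus the north pole; the north pole
itself is the antipode of a limit of black points, and negation preserves colours. Finally,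
permuting coordinates is an isometry that permutes the colours.
-/

/-- The colour class of the rational unit vectors in `ℝ³` whose `i`-th reduced
integer coordinate is odd (red for `i = 0`, white for `i = 1`, black for
`i = 2`). -/
def colourClass (i : Fin 3) : Set (EuclideanSpace ℝ (Fin 3)) :=
  {y | ‖y‖ = 1 ∧ ∃ n : Fin 3 → ℤ, ∃ d : ℤ, 0 < d ∧
    Int.gcd (Int.gcd (n 0) (n 1) : ℤ) (n 2) = 1 ∧
    (∀ j, y j = (n j : ℝ) / (d : ℝ)) ∧ Odd (n i)}

open Filter Topology

theorem Int.gcd_gcd_ediv_gcd_gcd {a b c : ℤ} (h : 0 < Int.gcd (Int.gcd a b : ℤ) c) :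
    Int.gcd (Int.gcd (a / Int.gcd (Int.gcd a b : ℤ) c) (b / Int.gcd (Int.gcd a b : ℤ) c) : ℤ)
      (c / Int.gcd (Int.gcd a b : ℤ) c) = 1 := by
  set g := Int.gcd (Int.gcd a b : ℤ) c with hg
  have ha : a / g * g = a :=
    Int.ediv_mul_cancel ((Int.gcd_dvd_left _ _).trans (Int.gcd_dvd_left _ _))
  have hb : b / g * g = b :=
    Int.ediv_mul_cancel ((Int.gcd_dvd_left _ _).trans (Int.gcd_dvd_right _ _))
  have hc : c / g * g = c := Int.ediv_mul_cancel (Int.gcd_dvd_right _ _)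
  refine (Nat.mul_eq_right h.ne').mp ?_
  conv_rhs => rw [hg, ← ha, ← hb, ← hc, Int.gcd_mul_right, Int.natAbs_natCast, Nat.cast_mul,
    Int.gcd_mul_right, Int.natAbs_natCast]

theorem sum_sq_eq_sq_of_norm_eq_one {ι : Type*} [Fintype ι] {y : EuclideanSpace ℝ ι}
    (hy : ‖y‖ = 1) {m : ι → ℤ} {e : ℤ} (he : e ≠ 0) (hym : ∀ j, y j = m j / e) :
    ∑ j, m j ^ 2 = e ^ 2 := by
  have h := EuclideanSpace.norm_sq_eq y
  simp only [hy, hym, Real.norm_eq_abs, sq_abs, div_pow, ← Finset.sum_div] at h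
  rw [eq_div_iff (by positivity), one_pow, one_mul] at h
  exact_mod_cast h.symm

theorem mem_colourClass_of_odd {i : Fin 3} {y : EuclideanSpace ℝ (Fin 3)} (hy : ‖y‖ = 1)
    {m : Fin 3 → ℤ} {e : ℤ} (he : 0 < e) (hym : ∀ j, y j = m j / e) (hodd : Odd (m i)) :
    y ∈ colourClass i := by
  set g : ℤ := (Int.gcd (Int.gcd (m 0) (m 1) : ℤ) (m 2) : ℤ)
  have hg_dvd : ∀ j, g ∣ m j := by
    intro j
    fin_cases j
    exacts [(Int.gcd_dvd_left _ _).trans (Int.gcd_dvd_left _ _),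
      (Int.gcd_dvd_left _ _).trans (Int.gcd_dvd_right _ _), Int.gcd_dvd_right _ _]
  have hg : 0 < g := by
    refine lt_of_le_of_ne (by positivity) fun hg0 => ?_
    have := hg_dvd i
    rw [← hg0, zero_dvd_iff] at this
    simp [this] at hodd
  have hge : g ∣ e := by
    rw [← Int.pow_dvd_pow_iff two_ne_zero, ← sum_sq_eq_sq_of_norm_eq_one hy he.ne' hym]
    exact Finset.dvd_sum fun j _ => pow_dvd_pow_of_dvd (hg_dvd j) 2
  have hg0 : (g : ℝ) ≠ 0 := by exact_mod_cast hg.ne'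
  refine ⟨hy, fun j => m j / g, e / g, Int.ediv_pos_of_pos_of_dvd he hg.le hge,
    Int.gcd_gcd_ediv_gcd_gcd (Int.natCast_pos.mp hg), fun j => ?_, ?_⟩
  · rw [hym j, Int.cast_div (hg_dvd j) hg0, Int.cast_div hge hg0, div_div_div_cancel_right₀ hg0]
  · exact (Int.odd_mul.mp ((Int.ediv_mul_cancel (hg_dvd i)).symm ▸ hodd)).1

theorem neg_mem_colourClass {i : Fin 3} {y : EuclideanSpace ℝ (Fin 3)}
    (hy : y ∈ colourClass i) : -y ∈ colourClass i := by
  obtain ⟨hy1, n, d, hd, -, hyn, hodd⟩ := hy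
  exact mem_colourClass_of_odd (m := -n) (by rwa [norm_neg]) hd
    (fun j => by simp [hyn j, neg_div]) (by simpa using hodd.neg)

theorem piLpCongrLeft_mem_colourClass (σ : Equiv.Perm (Fin 3)) {i : Fin 3}
    {y : EuclideanSpace ℝ (Fin 3)} (hy : y ∈ colourClass i) :
    LinearIsometryEquiv.piLpCongrLeft 2 ℝ ℝ σ y ∈ colourClass (σ i) := by
  obtain ⟨hy1, n, d, hd, -, hyn, hodd⟩ := hy
  exact mem_colourClass_of_odd (m := n ∘ σ.symm) (by rwa [LinearIsometryEquiv.norm_map]) hd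
    (fun j => by simp [Equiv.piCongrLeft', hyn]) (by simpa using hodd)

noncomputable def stereoInv (p : ℝ × ℝ) : EuclideanSpace ℝ (Fin 3) :=
  (p.1 ^ 2 + p.2 ^ 2 + 1)⁻¹ • !₂[2 * p.1, 2 * p.2, p.1 ^ 2 + p.2 ^ 2 - 1]

theorem continuous_stereoInv : Continuous stereoInv := by
  unfold stereoInv
  fun_prop (disch := intro; positivity)

theorem norm_stereoInv (p : ℝ × ℝ) : ‖stereoInv p‖ = 1 := by
  rw [EuclideanSpace.norm_eq, Real.sqrt_eq_one]
  simp only [stereoInv, Fin.sum_univ_three, Fin.isValue, PiLp.smul_apply, smul_eq_mul,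
    Matrix.cons_val_zero, Matrix.cons_val_one, Matrix.cons_val, norm_mul, norm_inv,
    Real.norm_eq_abs, mul_pow, inv_pow, sq_abs]
  field_simp
  ring

theorem stereoInv_proj {x : EuclideanSpace ℝ (Fin 3)} (hx : ‖x‖ = 1) (h2 : x 2 ≠ 1) :
    stereoInv (x 0 / (1 - x 2), x 1 / (1 - x 2)) = x := by
  have hsum : x 0 ^ 2 + x 1 ^ 2 + x 2 ^ 2 = 1 := by
    simpa [hx, Fin.sum_univ_three] using (EuclideanSpace.norm_sq_eq x).symm
  have h2' : 1 - x 2 ≠ 0 := sub_ne_zero.mpr h2.symm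
  ext j
  fin_cases j <;>
    simp only [stereoInv, Fin.isValue, Fin.zero_eta, Fin.mk_one, Fin.reduceFinMk,
      PiLp.smul_apply, smul_eq_mul, Matrix.cons_val_zero, Matrix.cons_val_one, Matrix.cons_val] <;>
    field_simp
  · linear_combination -x 0 * hsum
  · linear_combination -x 1 * hsum
  · linear_combination (1 - x 2) * hsum

theorem stereoInv_mem_colourClass_two (a b : ℤ) {c : ℤ} (hc : 0 < c) (hodd : Odd c) :
    stereoInv (2 * a / c, 2 * b / c) ∈ colourClass 2 := by
  refine mem_colourClass_of_odd (norm_stereoInv _)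
    (m := ![4 * a * c, 4 * b * c, 4 * a ^ 2 + 4 * b ^ 2 - c ^ 2])
    (e := 4 * a ^ 2 + 4 * b ^ 2 + c ^ 2) (by positivity) (fun j => ?_) ?_
  · have : (c : ℝ) ≠ 0 := by exact_mod_cast hc.ne'
    fin_cases j <;>
      simp only [stereoInv, Fin.isValue, Fin.zero_eta, Fin.mk_one, Fin.reduceFinMk,
        PiLp.smul_apply, smul_eq_mul, Matrix.cons_val_zero, Matrix.cons_val_one, Matrix.cons_val,
        Int.cast_sub, Int.cast_add, Int.cast_mul, Int.cast_ofNat, Int.cast_pow] <;>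
      field_simp <;> ring
  · have h4 : Even (4 * a ^ 2 + 4 * b ^ 2) := ⟨2 * a ^ 2 + 2 * b ^ 2, by ring⟩
    simpa using h4.sub_odd hodd.pow

theorem tendsto_two_mul_floor_half_mul_div (r : ℝ) :
    Tendsto (fun c : ℝ => 2 * ⌊r * c / 2⌋ / c) atTop (𝓝 r) := by
  have hlow : Tendsto (fun c : ℝ => r - 2 * c⁻¹) atTop (𝓝 r) := by
    simpa using tendsto_const_nhds.sub (tendsto_inv_atTop_zero.const_mul (2 : ℝ))
  refine tendsto_of_tendsto_of_tendsto_of_le_of_le' hlow tendsto_const_nhds ?_ ?_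
  · filter_upwards [eventually_gt_atTop 0] with c hc
    rw [le_div_iff₀ hc, sub_mul, mul_assoc, inv_mul_cancel₀ hc.ne']
    linarith [Int.lt_floor_add_one (r * c / 2)]
  · filter_upwards [eventually_gt_atTop 0] with c hc
    rw [div_le_iff₀ hc]
    linarith [Int.floor_le (r * c / 2)]

theorem mem_closure_colourClass_two_of_ne {x : EuclideanSpace ℝ (Fin 3)} (hx : ‖x‖ = 1)
    (h2 : x 2 ≠ 1) : x ∈ closure (colourClass 2) := by
  set u := x 0 / (1 - x 2)
  set v := x 1 / (1 - x 2)
  have hodd : Tendsto (fun k : ℕ => (2 * k + 1 : ℝ)) atTop atTop :=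
    tendsto_atTop_add_const_right _ 1 (tendsto_natCast_atTop_atTop.const_mul_atTop two_pos)
  have happrox := ((tendsto_two_mul_floor_half_mul_div u).comp hodd).prodMk_nhds
    ((tendsto_two_mul_floor_half_mul_div v).comp hodd)
  rw [← stereoInv_proj hx h2]
  refine mem_closure_of_tendsto ((continuous_stereoInv.tendsto _).comp happrox)
    (Eventually.of_forall fun k => ?_)
  simpa using stereoInv_mem_colourClass_two ⌊u * (2 * k + 1) / 2⌋ ⌊v * (2 * k + 1) / 2⌋
    (c := 2 * k + 1) (by positivity) (odd_two_mul_add_one _)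

theorem mem_closure_colourClass_two {x : EuclideanSpace ℝ (Fin 3)} (hx : ‖x‖ = 1) :
    x ∈ closure (colourClass 2) := by
  by_cases h2 : x 2 = 1
  · have hneg := mem_closure_colourClass_two_of_ne (x := -x) (by rwa [norm_neg])
      (by norm_num [h2])
    simpa using map_mem_closure continuous_neg hneg fun y hy => neg_mem_colourClass hy
  · exact mem_closure_colourClass_two_of_ne hx h2

theorem colour_classes_dense_in_sphere (i : Fin 3)
    (x : EuclideanSpace ℝ (Fin 3)) (hx : ‖x‖ = 1) :
    x ∈ closure (colourClass i) := by
  let σ := Equiv.swap (2 : Fin 3) i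
  let L := LinearIsometryEquiv.piLpCongrLeft 2 ℝ ℝ σ
  have h := mem_closure_colourClass_two (x := L.symm x) (by rwa [L.symm.norm_map])
  simpa [σ] using map_mem_closure L.continuous h fun y hy => piLpCongrLeft_mem_colourClass σ hy
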